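/- arXiv:1607.00339 — 2 statements merged into one kernel-verified Lean document; each statement's English description precedes it below -/
import Mathlib

section
/- There exists δ > 0 such that for every sequence (P_m)_{m≥1} with P_m = P⁰ for m odd and P_m ∈ {P⁰, P¹} for m even, and for all m ≥ 0 and n ≥ 3, the composition Q_{m,m+n} maps D(0,δ) ∪ D(−1,δ) into D(0,δ) ∪ D(−1,δ). -/
open Filter

/-- `P⁰(z) = z² − 1`. -/
def P0 : ℂ → ℂ := fun z => z ^ 2 - 1

/-- `P¹(z) = z³`. -/
def P1 : ℂ → ℂ := fun z => z ^ 3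

/-- `Qcomp P m n z` is the value at `z` of the composition
`Q_{m,n} = P_n ∘ ⋯ ∘ P_{m+1}` (with `Q_{m,m} = id`). -/
def Qcomp (P : ℕ → ℂ → ℂ) (m n : ℕ) (z : ℂ) : ℂ :=
  (List.range (n - m)).foldl (fun w k => P (m + k + 1) w) z

/-- Sequences with `P_m = P⁰` for odd `m` and `P_m ∈ {P⁰, P¹}` for even `m`. -/
def IsAdmissibleSeq (P : ℕ → ℂ → ℂ) : Prop :=
  ∀ m, 1 ≤ m → (Odd m → P m = P0) ∧ (Even m → P m = P0 ∨ P m = P1)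

/-! ### Auxiliary lemmas -/

lemma norm_P0_add_one (z : ℂ) : ‖P0 z + 1‖ = ‖z‖ ^ 2 := by
  have : P0 z + 1 = z ^ 2 := by unfold P0; ring
  rw [this, norm_pow]

lemma norm_P1' (z : ℂ) : ‖P1 z‖ = ‖z‖ ^ 3 := by
  rw [show P1 z = z ^ 3 from rfl, norm_pow]

lemma norm_P0_le (z : ℂ) : ‖P0 z‖ ≤ ‖z + 1‖ * (‖z + 1‖ + 2) := by
  have h1 : P0 z = (z + 1) * (z - 1) := by unfold P0; ring
  rw [h1, norm_mul]
  refine mul_le_mul_of_nonneg_left ?_ (norm_nonneg _)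
  have h2 : z - 1 = (z + 1) - 2 := by ring
  rw [h2]
  refine (norm_sub_le _ _).trans ?_
  simp

lemma norm_P1_add_one_le (z : ℂ) :
    ‖P1 z + 1‖ ≤ ‖z + 1‖ * (‖z + 1‖ ^ 2 + 3 * ‖z + 1‖ + 3) := by
  have h1 : P1 z + 1 = (z + 1) * ((z + 1) ^ 2 - 3 * (z + 1) + 3) := by unfold P1; ring
  rw [h1, norm_mul]
  refine mul_le_mul_of_nonneg_left ?_ (norm_nonneg _)
  calc ‖(z + 1) ^ 2 - 3 * (z + 1) + 3‖
      ≤ ‖(z + 1) ^ 2 - 3 * (z + 1)‖ + ‖(3 : ℂ)‖ := norm_add_le _ _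
    _ ≤ ‖(z + 1) ^ 2‖ + ‖3 * (z + 1)‖ + ‖(3 : ℂ)‖ := by
        have := norm_sub_le ((z + 1) ^ 2) (3 * (z + 1)); linarith
    _ ≤ ‖z + 1‖ ^ 2 + 3 * ‖z + 1‖ + 3 := by
        rw [norm_pow, norm_mul]; simp

lemma stepP0_near0 {z : ℂ} {e : ℝ} (hz : ‖z‖ < e) : ‖P0 z + 1‖ < e ^ 2 := by
  rw [norm_P0_add_one]
  exact pow_lt_pow_left₀ hz (norm_nonneg z) two_ne_zero

lemma stepP1_near0 {z : ℂ} {e : ℝ} (hz : ‖z‖ < e) : ‖P1 z‖ < e ^ 3 := by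
  rw [norm_P1']
  exact pow_lt_pow_left₀ hz (norm_nonneg z) three_ne_zero

lemma stepP0_near1 {z : ℂ} {e : ℝ} (hz : ‖z + 1‖ < e) (he : e ≤ 1) :
    ‖P0 z‖ < 3 * e := by
  have h := norm_P0_le z
  have h0 : (0 : ℝ) ≤ ‖z + 1‖ := norm_nonneg _
  nlinarith

lemma stepP1_near1 {z : ℂ} {e : ℝ} (hz : ‖z + 1‖ < e) (he : e ≤ 1 / 4) :
    ‖P1 z + 1‖ < 4 * e := by
  have h := norm_P1_add_one_le z
  have h0 : (0 : ℝ) ≤ ‖z + 1‖ := norm_nonneg _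
  nlinarith

lemma admissible_cases {P : ℕ → ℂ → ℂ} (hP : IsAdmissibleSeq P) {i : ℕ} (hi : 1 ≤ i) :
    P i = P0 ∨ (P i = P1 ∧ Even i) := by
  obtain ⟨h1, h2⟩ := hP i hi
  rcases Nat.even_or_odd i with he | ho
  · rcases h2 he with h | h
    · exact Or.inl h
    · exact Or.inr ⟨h, he⟩
  · exact Or.inl (h1 ho)

lemma even_odd_contra {i : ℕ} (he : Even i) (ho : Odd i) : False := by
  simp [Nat.even_iff, Nat.odd_iff] at he ho
  omega

/-- The trapping invariant (after at least three steps). -/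
def St (w : ℂ) (i : ℕ) : Prop :=
  ‖w‖ < 3 / 62500 ∨ ‖w + 1‖ < 1 / 250000 ∨ (‖w + 1‖ < 1 / 62500 ∧ Odd i)

lemma St_step {P : ℕ → ℂ → ℂ} (hP : IsAdmissibleSeq P) {i : ℕ} (hi : 1 ≤ i) {w : ℂ}
    (h : St w i) : St (P i w) (i + 1) := by
  rcases admissible_cases hP hi with hp | ⟨hp, heven⟩
  · rw [hp]
    rcases h with h1 | h2 | ⟨h3, _⟩
    · exact Or.inr (Or.inl (lt_of_lt_of_le (stepP0_near0 h1) (by norm_num)))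
    · exact Or.inl (lt_of_lt_of_le (stepP0_near1 h2 (by norm_num)) (by norm_num))
    · exact Or.inl (lt_of_lt_of_le (stepP0_near1 h3 (by norm_num)) (by norm_num))
  · rw [hp]
    rcases h with h1 | h2 | ⟨_, hodd⟩
    · exact Or.inl (lt_of_lt_of_le (stepP1_near0 h1) (by norm_num))
    · exact Or.inr (Or.inr ⟨lt_of_lt_of_le (stepP1_near1 h2 (by norm_num)) (by norm_num),
        heven.add_one⟩)
    · exact (even_odd_contra heven hodd).elim

lemma Qcomp_zero (P : ℕ → ℂ → ℂ) (m : ℕ) (z : ℂ) : Qcomp P m (m + 0) z = z := by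
  simp [Qcomp]

lemma Qcomp_succ (P : ℕ → ℂ → ℂ) (m n : ℕ) (z : ℂ) :
    Qcomp P m (m + (n + 1)) z = P (m + n + 1) (Qcomp P m (m + n) z) := by
  unfold Qcomp
  rw [Nat.add_sub_cancel_left, Nat.add_sub_cancel_left, List.range_succ,
    List.foldl_append]
  simp

/-- There is a uniform `δ > 0` such that for every admissible sequence, all
`m ≥ 0` and `n ≥ 3`, `Q_{m,m+n}` maps `D(0,δ) ∪ D(−1,δ)` into itself. -/
theorem uniform_postcritical_trapping :
    ∃ δ : ℝ, 0 < δ ∧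
      ∀ P : ℕ → ℂ → ℂ, IsAdmissibleSeq P →
        ∀ m n : ℕ, 3 ≤ n →
          ∀ z ∈ Metric.ball (0 : ℂ) δ ∪ Metric.ball (-1 : ℂ) δ,
            Qcomp P m (m + n) z ∈ Metric.ball (0 : ℂ) δ ∪ Metric.ball (-1 : ℂ) δ := by
  refine ⟨1 / 10000, by norm_num, ?_⟩
  intro P hP m n hn z hz
  have hz' : ‖z‖ < 1 / 10000 ∨ ‖z + 1‖ < 1 / 10000 := by
    rcases hz with h | h
    · left; simpa [mem_ball_iff_norm] using h
    · right
      rw [mem_ball_iff_norm, sub_neg_eq_add] at h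
      exact h
  -- step 1
  have h1 : ‖P (m + 1) z + 1‖ < 1 / 100000000 ∨ ‖P (m + 1) z‖ < 3 / 10000 ∨
      (‖P (m + 1) z + 1‖ < 4 / 10000 ∧ Odd (m + 2)) := by
    rcases admissible_cases hP (show 1 ≤ m + 1 by omega) with hp | ⟨hp, he⟩
    · rw [hp]
      rcases hz' with h | h
      · exact Or.inl (lt_of_lt_of_le (stepP0_near0 h) (by norm_num))
      · exact Or.inr (Or.inl (lt_of_lt_of_le (stepP0_near1 h (by norm_num)) (by norm_num)))
    · rw [hp]
      rcases hz' with h | h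
      · exact Or.inr (Or.inl (lt_of_lt_of_le (stepP1_near0 h) (by norm_num)))
      · exact Or.inr (Or.inr ⟨lt_of_lt_of_le (stepP1_near1 h (by norm_num)) (by norm_num),
          he.add_one⟩)
  -- step 2
  set w1 := P (m + 1) z with hw1
  have h2 : ‖P (m + 2) w1‖ < 12 / 10000 ∨ ‖P (m + 2) w1 + 1‖ < 9 / 100000000 := by
    rcases h1 with hA | hB | ⟨hC, hodd⟩
    · rcases admissible_cases hP (show 1 ≤ m + 2 by omega) with hp | ⟨hp, _⟩
      · rw [hp]
        exact Or.inl (lt_of_lt_of_le (stepP0_near1 hA (by norm_num)) (by norm_num))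
      · rw [hp]
        exact Or.inr (lt_of_lt_of_le (stepP1_near1 hA (by norm_num)) (by norm_num))
    · rcases admissible_cases hP (show 1 ≤ m + 2 by omega) with hp | ⟨hp, _⟩
      · rw [hp]
        exact Or.inr (lt_of_lt_of_le (stepP0_near0 hB) (by norm_num))
      · rw [hp]
        exact Or.inl (lt_of_lt_of_le (stepP1_near0 hB) (by norm_num))
    · rcases admissible_cases hP (show 1 ≤ m + 2 by omega) with hp | ⟨hp, heven⟩
      · rw [hp]
        exact Or.inl (lt_of_lt_of_le (stepP0_near1 hC (by norm_num)) (by norm_num))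
      · exact (even_odd_contra heven hodd).elim
  -- step 3
  set w2 := P (m + 2) w1 with hw2
  have h3 : St (P (m + 3) w2) (m + 4) := by
    rcases h2 with hD | hE
    · rcases admissible_cases hP (show 1 ≤ m + 3 by omega) with hp | ⟨hp, _⟩
      · rw [hp]
        exact Or.inr (Or.inl (lt_of_lt_of_le (stepP0_near0 hD) (by norm_num)))
      · rw [hp]
        exact Or.inl (lt_of_lt_of_le (stepP1_near0 hD) (by norm_num))
    · rcases admissible_cases hP (show 1 ≤ m + 3 by omega) with hp | ⟨hp, heven⟩
      · rw [hp]
        exact Or.inl (lt_of_lt_of_le (stepP0_near1 hE (by norm_num)) (by norm_num))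
      · rw [hp]
        exact Or.inr (Or.inr ⟨lt_of_lt_of_le (stepP1_near1 hE (by norm_num)) (by norm_num),
          heven.add_one⟩)
  have hQ3 : Qcomp P m (m + 3) z = P (m + 3) w2 := by
    have e3 : Qcomp P m (m + 3) z = P (m + 2 + 1) (Qcomp P m (m + 2) z) := Qcomp_succ P m 2 z
    have e2 : Qcomp P m (m + 2) z = P (m + 1 + 1) (Qcomp P m (m + 1) z) := Qcomp_succ P m 1 z
    have e1 : Qcomp P m (m + 1) z = P (m + 0 + 1) (Qcomp P m (m + 0) z) := Qcomp_succ P m 0 z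
    rw [e3, e2, e1, Qcomp_zero]
  have key : ∀ k, St (Qcomp P m (m + (3 + k)) z) (m + (3 + k) + 1) := by
    intro k
    induction k with
    | zero => simpa [hQ3] using h3
    | succ k ih =>
      have e : Qcomp P m (m + (3 + (k + 1))) z
          = P (m + (3 + k) + 1) (Qcomp P m (m + (3 + k)) z) := Qcomp_succ P m (3 + k) z
      rw [e]
      exact St_step hP (show 1 ≤ m + (3 + k) + 1 by omega) ih
  obtain ⟨k, rfl⟩ : ∃ k, n = 3 + k := ⟨n - 3, by omega⟩
  rcases key k with h | h | ⟨h, _⟩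
  · left
    simpa [mem_ball_iff_norm] using lt_of_lt_of_le h (by norm_num)
  · right
    rw [mem_ball_iff_norm, sub_neg_eq_add]
    exact lt_of_lt_of_le h (by norm_num)
  · right
    rw [mem_ball_iff_norm, sub_neg_eq_add]
    exact lt_of_lt_of_le h (by norm_num)
end

section
/- For every sequence (P_m)_{m≥1} with P_m = P⁰ for m odd and P_m ∈ {P⁰, P¹} for m even, there exists a sequence of points (p_m)_{m≥0} such that for every m ≥ 0: p_m lies in the open real interval (−1,0) and in the frontier of 𝒦_m, and P_{m+1}(p_m) = p_{m+1}. -/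
open Filter

/-- The `m`-th iterated filled Julia set. -/
def filledJulia (P : ℕ → ℂ → ℂ) (m : ℕ) : Set ℂ :=
  {z | ∃ C : ℝ, ∀ n, m ≤ n → ‖Qcomp P m n z‖ ≤ C}

/-! Group the maps in pairs `B_k = P_{2k+2} ∘ P_{2k+1}`: each is `(z² - 1)² - 1` or `(z² - 1)³`,
and on `I = [-2/3, -1/3]` each `B_k` covers `I` and expands, `|B_k'| ≥ 32/27`. A nested-compact-sets
argument gives `x₀` whose orbit visits `I` at every even time, so the whole orbit lies in `(-1, 0)`
and `p_m ∈ 𝒦_m`. If `p_m` were interior to `𝒦_m`, a disc around it would stay inside the escape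
radius `2` forever, and Cauchy's estimate would bound the derivatives of `Q_{m,n}` at `p_m`,
against their exponential growth. -/

open Set Metric

lemma exists_forall_mem_of_subset_image {X : Type*} [TopologicalSpace X] [T2Space X]
    {K : Set X} (hK : IsCompact K) (hK_ne : K.Nonempty) {F g : ℕ → X → X}
    (hF : ∀ k, Continuous (F k)) (hF0 : F 0 = id) (hFg : ∀ k x, F (k + 1) x = g k (F k x))
    (hg : ∀ k, K ⊆ g k '' K) :
    ∃ x, ∀ k, F k x ∈ K := by
  set S : ℕ → Set X := fun N => {x | ∀ k ≤ N, F k x ∈ K}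
  have hS_closed : ∀ N, IsClosed (S N) := fun N => by
    simp only [S, ofPred_forall]
    exact isClosed_biInter fun k _ => hK.isClosed.preimage (hF k)
  have hS_hit : ∀ N, ∀ y ∈ K, ∃ x ∈ S N, F N x = y := by
    intro N
    induction N with
    | zero => exact fun y hy => ⟨y, fun k hk => by simpa [Nat.le_zero.1 hk, hF0], by simp [hF0]⟩
    | succ N ih =>
      intro y hy
      obtain ⟨w, hw, rfl⟩ := hg N hy
      obtain ⟨x, hxS, rfl⟩ := ih w hw
      refine ⟨x, fun k hk => ?_, hFg N x⟩
      rcases Nat.lt_or_eq_of_le hk with hk | rfl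
      · exact hxS k (by omega)
      · rwa [hFg]
  obtain ⟨y, hy⟩ := hK_ne
  obtain ⟨x, hx⟩ := IsCompact.nonempty_iInter_of_sequence_nonempty_isCompact_isClosed S
    (fun N x hx k hk => hx k (by omega)) (fun N => ⟨_, (hS_hit N y hy).choose_spec.1⟩)
    (hK.of_isClosed_subset (hS_closed 0) fun x hx => by simpa [hF0] using hx 0 le_rfl) hS_closed
  exact ⟨x, fun k => mem_iInter.1 hx k k le_rfl⟩

namespace Qcomp

variable {P : ℕ → ℂ → ℂ} {m k n : ℕ}

variable (P) in
lemma self (m : ℕ) (z : ℂ) : Qcomp P m m z = z := by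
  simp [Qcomp]

lemma succ (h : m ≤ n) (z : ℂ) : Qcomp P m (n + 1) z = P (n + 1) (Qcomp P m n z) := by
  rw [Qcomp, Qcomp, show n + 1 - m = n - m + 1 by omega, List.range_succ, List.foldl_append,
    List.foldl_cons, List.foldl_nil, show m + (n - m) + 1 = n + 1 by omega]

lemma trans (hmk : m ≤ k) (hkn : k ≤ n) (z : ℂ) :
    Qcomp P k n (Qcomp P m k z) = Qcomp P m n z := by
  induction n, hkn using Nat.le_induction with
  | base => exact self P k _
  | succ n hkn ih => rw [succ hkn, succ (hmk.trans hkn), ih]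

lemma differentiable (hP : ∀ j, m < j → Differentiable ℂ (P j)) (h : m ≤ n) :
    Differentiable ℂ (Qcomp P m n) := by
  induction n, h using Nat.le_induction with
  | base => simpa only [funext (self P m)] using differentiable_fun_id
  | succ n hmn ih =>
    rw [show Qcomp P m (n + 1) = P (n + 1) ∘ Qcomp P m n from funext (succ hmn)]
    exact (hP (n + 1) (by omega)).comp ih

lemma deriv_trans (hP : ∀ j, m < j → Differentiable ℂ (P j)) (hmk : m ≤ k) (hkn : k ≤ n)
    (z : ℂ) :
    deriv (Qcomp P m n) z = deriv (Qcomp P k n) (Qcomp P m k z) * deriv (Qcomp P m k) z := by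
  have hcomp : Qcomp P m n = Qcomp P k n ∘ Qcomp P m k := funext fun w => (trans hmk hkn w).symm
  rw [hcomp, deriv_comp]
  · exact (differentiable (fun j hj => hP j (by omega)) hkn).differentiableAt
  · exact (differentiable hP hmk).differentiableAt

end Qcomp

section FilledJulia

variable {P : ℕ → ℂ → ℂ} {m : ℕ} {z : ℂ}

lemma norm_Qcomp_lt_of_mem_filledJulia {R c : ℝ} (hR : 0 < R) (hc : 1 < c)
    (hesc : ∀ j, m < j → ∀ w, R ≤ ‖w‖ → c * ‖w‖ ≤ ‖P j w‖) (hz : z ∈ filledJulia P m)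
    {n : ℕ} (hn : m ≤ n) : ‖Qcomp P m n z‖ < R := by
  obtain ⟨C, hC⟩ := hz
  by_contra! hn'
  have hgrow : ∀ j, c ^ j * ‖Qcomp P m n z‖ ≤ ‖Qcomp P m (n + j) z‖ := by
    intro j
    induction j with
    | zero => simp
    | succ j ih =>
      have hR' : R ≤ ‖Qcomp P m (n + j) z‖ :=
        hn'.trans (le_mul_of_one_le_left (norm_nonneg _) (one_le_pow₀ hc.le) |>.trans ih)
      calc c ^ (j + 1) * ‖Qcomp P m n z‖ = c * (c ^ j * ‖Qcomp P m n z‖) := by ring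
        _ ≤ c * ‖Qcomp P m (n + j) z‖ := by gcongr
        _ ≤ ‖Qcomp P m (n + (j + 1)) z‖ := by
          rw [← add_assoc, Qcomp.succ (by omega)]
          exact hesc _ (by omega) _ hR'
  obtain ⟨j, hj⟩ := pow_unbounded_of_one_lt (C / R) hc
  have := (hgrow j).trans (hC (n + j) (by omega))
  rw [div_lt_iff₀ hR] at hj
  nlinarith [pow_pos (by linarith : (0 : ℝ) < c) j]

lemma exists_bound_norm_deriv_Qcomp_of_mem_interior {R : ℝ}
    (hP : ∀ j, m < j → Differentiable ℂ (P j))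
    (hbound : ∀ w ∈ filledJulia P m, ∀ n, m ≤ n → ‖Qcomp P m n w‖ ≤ R)
    (hz : z ∈ interior (filledJulia P m)) :
    ∃ C, ∀ n, m ≤ n → ‖deriv (Qcomp P m n) z‖ ≤ C := by
  obtain ⟨ε, hε, hball⟩ := Metric.mem_nhds_iff.1 (mem_interior_iff_mem_nhds.1 hz)
  refine ⟨2 * R / ε, fun n hn => ?_⟩
  refine Complex.norm_deriv_le_div_of_mapsTo_ball
    (Qcomp.differentiable hP hn).differentiableOn (fun w hw => ?_) hε
  rw [mem_closedBall, dist_eq_norm]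
  calc ‖Qcomp P m n w - Qcomp P m n z‖ ≤ ‖Qcomp P m n w‖ + ‖Qcomp P m n z‖ := norm_sub_le _ _
    _ ≤ R + R := add_le_add (hbound w (hball hw) n hn)
        (hbound z (interior_subset hz) n hn)
    _ = 2 * R := by ring

end FilledJulia

local notation "I₀" => ((↑) : ℝ → ℂ) '' Icc (-2 / 3 : ℝ) (-1 / 3)

lemma hasDerivAt_P0 (z : ℂ) : HasDerivAt P0 (2 * z) z :=
  ((hasDerivAt_pow 2 z).sub_const 1).congr_deriv (by norm_num)

lemma hasDerivAt_P1 (z : ℂ) : HasDerivAt P1 (3 * z ^ 2) z :=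
  (hasDerivAt_pow 3 z).congr_deriv (by norm_num)

lemma le_norm_P0 {w : ℂ} (hw : 2 ≤ ‖w‖) : 3 / 2 * ‖w‖ ≤ ‖P0 w‖ := by
  have h := norm_sub_norm_le (w ^ 2) 1
  rw [norm_pow, norm_one] at h
  simp only [P0]
  nlinarith

lemma le_norm_P1 {w : ℂ} (hw : 2 ≤ ‖w‖) : 3 / 2 * ‖w‖ ≤ ‖P1 w‖ := by
  simp only [P1, norm_pow]
  nlinarith [mul_le_mul hw hw zero_le_two (norm_nonneg w)]

lemma P0_ofReal (t : ℝ) : P0 t = ((t ^ 2 - 1 : ℝ) : ℂ) := by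
  simp [P0]

lemma P0_ofReal_mem_Ioo {t : ℝ} (ht : t ∈ Icc (-2 / 3 : ℝ) (-1 / 3)) :
    P0 t ∈ ((↑) : ℝ → ℂ) '' Ioo (-1) 0 :=
  ⟨t ^ 2 - 1, ⟨by nlinarith [ht.2], by nlinarith [ht.1, ht.2]⟩, (P0_ofReal t).symm⟩

lemma subset_image_comp_P0 {Q : ℂ → ℂ} (hQ : Q = P0 ∨ Q = P1) :
    I₀ ⊆ (Q ∘ P0) '' I₀ := by
  rintro _ ⟨y, hy, rfl⟩
  obtain ⟨q, hq, hQq⟩ : ∃ q : ℝ → ℝ, Continuous q ∧ ∀ t : ℝ, Q (P0 t) = q t ∧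
      Icc (-2 / 3 : ℝ) (-1 / 3) ⊆ uIcc (q (-2 / 3)) (q (-1 / 3)) := by
    rcases hQ with rfl | rfl
    · refine ⟨fun t => (t ^ 2 - 1) ^ 2 - 1, by fun_prop, fun t => ⟨by simp [P0], ?_⟩⟩
      rw [uIcc_of_le (by norm_num)]
      exact Icc_subset_Icc (by norm_num) (by norm_num)
    · refine ⟨fun t => (t ^ 2 - 1) ^ 3, by fun_prop, fun t => ⟨by simp [P0, P1], ?_⟩⟩
      rw [uIcc_of_ge (by norm_num)]
      exact Icc_subset_Icc (by norm_num) (by norm_num)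
  obtain ⟨t, ht, hty⟩ := intermediate_value_uIcc hq.continuousOn ((hQq 0).2 hy)
  rw [uIcc_of_le (by norm_num)] at ht
  exact ⟨t, ⟨t, ht, rfl⟩, by rw [Function.comp_apply, (hQq t).1, hty]⟩

lemma le_norm_deriv_comp_P0 {Q : ℂ → ℂ} (hQ : Q = P0 ∨ Q = P1) {t : ℝ}
    (ht : t ∈ Icc (-2 / 3 : ℝ) (-1 / 3)) : 32 / 27 ≤ ‖deriv (Q ∘ P0) t‖ := by
  obtain ⟨ht₁, ht₂⟩ := ht
  have h₀ : 0 ≤ 8 + 3 * t - 9 * t ^ 2 := by nlinarith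
  rcases hQ with rfl | rfl
  · rw [((hasDerivAt_P0 _).comp _ (hasDerivAt_P0 _)).deriv, P0_ofReal]
    norm_cast
    rw [Real.norm_eq_abs]
    refine le_trans ?_ (le_abs_self _)
    nlinarith [mul_nonneg (by linarith : (0 : ℝ) ≤ -(3 * t + 1)) h₀]
  · rw [((hasDerivAt_P1 _).comp _ (hasDerivAt_P0 _)).deriv, P0_ofReal]
    norm_cast
    rw [Real.norm_eq_abs]
    refine le_trans ?_ (neg_le_abs _)
    nlinarith [sq_nonneg (t + 2 / 3), sq_nonneg (t + 1 / 3), sq_nonneg (t ^ 2 - 1),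
      mul_nonneg (by linarith : (0 : ℝ) ≤ t + 2 / 3) (by linarith : (0 : ℝ) ≤ -1 / 3 - t),
      sq_nonneg t]

namespace IsAdmissibleSeq

variable {P : ℕ → ℂ → ℂ} (hP : IsAdmissibleSeq P)
include hP

lemma eq_P0_or_P1 {j : ℕ} (hj : 1 ≤ j) : P j = P0 ∨ P j = P1 := by
  rcases Nat.even_or_odd j with he | ho
  · exact (hP j hj).2 he
  · exact Or.inl ((hP j hj).1 ho)

lemma differentiable {j : ℕ} (hj : 1 ≤ j) : Differentiable ℂ (P j) := by
  rcases hP.eq_P0_or_P1 hj with h | h <;> rw [h]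
  exacts [fun z => (hasDerivAt_P0 z).differentiableAt,
    fun z => (hasDerivAt_P1 z).differentiableAt]

lemma norm_Qcomp_lt_two {m n : ℕ} {z : ℂ} (hz : z ∈ filledJulia P m) (hn : m ≤ n) :
    ‖Qcomp P m n z‖ < 2 := by
  refine norm_Qcomp_lt_of_mem_filledJulia two_pos (by norm_num : (1 : ℝ) < 3 / 2)
    (fun j hj w hw => ?_) hz hn
  rcases hP.eq_P0_or_P1 (j := j) (by omega) with h | h <;> rw [h]
  exacts [le_norm_P0 hw, le_norm_P1 hw]

lemma Qcomp_two_mul_add_two (k : ℕ) : Qcomp P (2 * k) (2 * k + 2) = P (2 * k + 2) ∘ P0 := by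
  funext z
  rw [Qcomp.succ (by omega), Qcomp.succ le_rfl, Qcomp.self,
    (hP (2 * k + 1) (by omega)).1 (by simp)]
  rfl

lemma notMem_interior_filledJulia {x₀ : ℂ}
    (hunb : ∀ C, ∃ᶠ n in atTop, C < ‖deriv (Qcomp P 0 n) x₀‖) (m : ℕ) :
    Qcomp P 0 m x₀ ∉ interior (filledJulia P m) := by
  intro hint
  obtain ⟨C, hC⟩ := exists_bound_norm_deriv_Qcomp_of_mem_interior (m := m)
    (fun j _ => hP.differentiable (by omega))
    (fun w hw n hn => (hP.norm_Qcomp_lt_two hw hn).le) hint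
  obtain ⟨n, hmn, hn⟩ := frequently_atTop.1 (hunb (C * ‖deriv (Qcomp P 0 m) x₀‖)) m
  rw [Qcomp.deriv_trans (fun j hj => hP.differentiable hj) (Nat.zero_le m) hmn, norm_mul] at hn
  exact hn.not_ge (mul_le_mul_of_nonneg_right (hC n hmn) (norm_nonneg _))

lemma exists_forall_Qcomp_two_mul_mem : ∃ x₀, ∀ k, Qcomp P 0 (2 * k) x₀ ∈ I₀ :=
  exists_forall_mem_of_subset_image (isCompact_Icc.image Complex.continuous_ofReal)
    ⟨_, mem_image_of_mem _ (left_mem_Icc.2 (by norm_num))⟩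
    (fun _ => (Qcomp.differentiable (fun _ _ => hP.differentiable (by omega)) (by omega)).continuous)
    (funext (Qcomp.self P 0)) (fun k x => (Qcomp.trans (by omega) (by omega) x).symm)
    (fun k => hP.Qcomp_two_mul_add_two k ▸ subset_image_comp_P0 (hP.eq_P0_or_P1 (by omega)))

variable {x₀ : ℂ} (hx₀ : ∀ k, Qcomp P 0 (2 * k) x₀ ∈ I₀)
include hx₀

lemma pow_le_norm_deriv_Qcomp (k : ℕ) : (32 / 27 : ℝ) ^ k ≤ ‖deriv (Qcomp P 0 (2 * k)) x₀‖ := by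
  induction k with
  | zero => simp [funext (Qcomp.self P 0)]
  | succ k ih =>
    obtain ⟨t, ht, htk⟩ := hx₀ k
    rw [show 2 * (k + 1) = 2 * k + 2 by ring, Qcomp.deriv_trans
      (fun j _ => hP.differentiable (by omega)) (Nat.zero_le _) (by omega : 2 * k ≤ 2 * k + 2),
      norm_mul, pow_succ', hP.Qcomp_two_mul_add_two, ← htk]
    exact mul_le_mul (le_norm_deriv_comp_P0 (hP.eq_P0_or_P1 (by omega)) ht) ih (by positivity)
      (norm_nonneg _)

lemma Qcomp_mem_Ioo (n : ℕ) : Qcomp P 0 n x₀ ∈ ((↑) : ℝ → ℂ) '' Ioo (-1) 0 := by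
  obtain ⟨k, rfl | rfl⟩ := Nat.even_or_odd' n
  · obtain ⟨t, ⟨ht₁, ht₂⟩, htk⟩ := hx₀ k
    exact ⟨t, ⟨by linarith, by linarith⟩, htk⟩
  · obtain ⟨t, ht, htk⟩ := hx₀ k
    rw [Qcomp.succ (Nat.zero_le _), ← htk, (hP (2 * k + 1) (by omega)).1 (by simp)]
    exact P0_ofReal_mem_Ioo ht

lemma Qcomp_mem_filledJulia (m : ℕ) : Qcomp P 0 m x₀ ∈ filledJulia P m := by
  refine ⟨1, fun n hn => ?_⟩
  obtain ⟨x, ⟨hx₁, hx₂⟩, hxn⟩ := hP.Qcomp_mem_Ioo hx₀ n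
  rw [Qcomp.trans (Nat.zero_le m) hn, ← hxn, Complex.norm_real, Real.norm_eq_abs, abs_le]
  constructor <;> linarith

lemma frequently_lt_norm_deriv_Qcomp (C : ℝ) :
    ∃ᶠ n in atTop, C < ‖deriv (Qcomp P 0 n) x₀‖ := by
  refine frequently_atTop.2 fun N => ?_
  obtain ⟨k, hCk, hNk⟩ := ((tendsto_pow_atTop_atTop_of_one_lt (by norm_num : (1 : ℝ) < 32 / 27)
    |>.eventually_gt_atTop C).and (eventually_ge_atTop N)).exists
  exact ⟨2 * k, by omega, hCk.trans_le (hP.pow_le_norm_deriv_Qcomp hx₀ k)⟩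

end IsAdmissibleSeq

/-- For every admissible sequence there is an orbit `(p_m)` with each `p_m` in
the open real interval `(−1,0)` and in the frontier of `𝒦_m` (i.e. in the
iterated Julia set `𝒥_m`). -/
theorem exists_real_orbit_on_julia
    (P : ℕ → ℂ → ℂ) (hP : IsAdmissibleSeq P) :
    ∃ p : ℕ → ℂ, ∀ m : ℕ,
      p m ∈ (fun x : ℝ => (x : ℂ)) '' Set.Ioo (-1 : ℝ) 0 ∧
      p m ∈ frontier (filledJulia P m) ∧
      P (m + 1) (p m) = p (m + 1) := by
  obtain ⟨x₀, hx₀⟩ := hP.exists_forall_Qcomp_two_mul_mem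
  exact ⟨fun n => Qcomp P 0 n x₀, fun m => ⟨hP.Qcomp_mem_Ioo hx₀ m,
    ⟨subset_closure (hP.Qcomp_mem_filledJulia hx₀ m),
      hP.notMem_interior_filledJulia (hP.frequently_lt_norm_deriv_Qcomp hx₀) m⟩,
    (Qcomp.succ (Nat.zero_le m) x₀).symm⟩⟩
end
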